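/- Let f : Δ_{n-1} → ℝ with L-Lipschitz gradient, x* a stationary point with I^c = {i : λ_i(x*) > 0} nonempty, and δ_min = min{λ_i(x*) : i ∈ I^c}. If x ∈ Δ_{n-1} satisfies ‖x − x*‖₁ < δ_min/(δ_min + 2L) and x_i = 0 for all i ∈ I^c, then λ_i(x) > 0 for all i ∈ I^c. -/

import Mathlib

/-!
Write `λ_i(y) = ⟪G y, e_i - y⟫`. Then
`λ_i(x) = λ_i(x*) + ⟪G x - G x*, e_i - x⟫ - ⟪G x*, x - x*⟫`.
Since `∑ x_j = 1`, the last inner product equals `∑_j x_j λ_j(x*)`, which vanishes: stationarity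
makes every `λ_j(x*)` nonnegative, and `x_j = 0` wherever `λ_j(x*) > 0`. The middle term is at
most `‖G x - G x*‖₁ ≤ L ‖x - x*‖₁` in absolute value, because every entry of `e_i - x` lies in
`[-1, 1]`. Finally `L δ_min / (δ_min + 2L) < δ_min ≤ λ_i(x*)`.
-/

open RealInnerProductSpace

def probSimplex (n : ℕ) : Set (EuclideanSpace ℝ (Fin n)) :=
  {x | (∀ i, 0 ≤ x i) ∧ ∑ i, x i = 1}

noncomputable def stdVec {n : ℕ} (i : Fin n) : EuclideanSpace ℝ (Fin n) :=
  EuclideanSpace.single i 1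

noncomputable def mult {n : ℕ} (G : EuclideanSpace ℝ (Fin n) → EuclideanSpace ℝ (Fin n))
    (x : EuclideanSpace ℝ (Fin n)) (i : Fin n) : ℝ :=
  ⟪G x, stdVec i - x⟫

section

variable {n : ℕ}

theorem inner_eq_sum_mul (a b : EuclideanSpace ℝ (Fin n)) : ⟪a, b⟫ = ∑ i, a i * b i := by
  simp [PiLp.inner_apply, mul_comm]

theorem stdVec_apply (i j : Fin n) : stdVec i j = if j = i then 1 else 0 := by
  simp [stdVec]

theorem stdVec_mem_probSimplex (i : Fin n) : stdVec i ∈ probSimplex n := by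
  refine ⟨fun j => ?_, ?_⟩
  · rw [stdVec_apply]
    split <;> norm_num
  · simp [stdVec_apply]

theorem abs_stdVec_sub_le_one {x : EuclideanSpace ℝ (Fin n)} (hx : x ∈ probSimplex n)
    (i j : Fin n) : |stdVec i j - x j| ≤ 1 := by
  have hxj_le : x j ≤ 1 := hx.2 ▸ Finset.single_le_sum (fun k _ => hx.1 k) (Finset.mem_univ j)
  rw [stdVec_apply, abs_le]
  split <;> constructor <;> linarith [hx.1 j]

theorem abs_inner_stdVec_sub_le {x : EuclideanSpace ℝ (Fin n)} (hx : x ∈ probSimplex n)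
    (v : EuclideanSpace ℝ (Fin n)) (i : Fin n) : |⟪v, stdVec i - x⟫| ≤ ∑ j, |v j| := by
  rw [inner_eq_sum_mul]
  refine (Finset.abs_sum_le_sum_abs _ _).trans (Finset.sum_le_sum fun j _ => ?_)
  rw [abs_mul, PiLp.sub_apply]
  exact mul_le_of_le_one_right (abs_nonneg _) (abs_stdVec_sub_le_one hx i j)

variable (G : EuclideanSpace ℝ (Fin n) → EuclideanSpace ℝ (Fin n))

theorem mult_nonneg_of_stationary {xs : EuclideanSpace ℝ (Fin n)}
    (hstat : ∀ y ∈ probSimplex n, 0 ≤ ⟪G xs, y - xs⟫) (j : Fin n) : 0 ≤ mult G xs j :=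
  hstat _ (stdVec_mem_probSimplex j)

/-- `z - y = ∑ j, z j • (e_j - y)` when the entries of `z` sum to one. -/
theorem sum_mul_mult_of_sum_eq_one (y z : EuclideanSpace ℝ (Fin n)) (hz : ∑ j, z j = 1) :
    ∑ j, z j * mult G y j = ⟪G y, z - y⟫ := by
  have hmult : ∀ j, mult G y j = G y j - ⟪G y, y⟫ := fun j => by
    simp [mult, stdVec, inner_sub_right, EuclideanSpace.inner_single_right]
  simp only [hmult, mul_sub, Finset.sum_sub_distrib, ← Finset.sum_mul, hz, one_mul,
    inner_sub_right, inner_eq_sum_mul (G y) z]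
  simp only [mul_comm]

theorem inner_sub_eq_zero_of_stationary_of_support {xs x : EuclideanSpace ℝ (Fin n)}
    (hstat : ∀ y ∈ probSimplex n, 0 ≤ ⟪G xs, y - xs⟫) (hx : x ∈ probSimplex n)
    (hsupp : ∀ i, 0 < mult G xs i → x i = 0) : ⟪G xs, x - xs⟫ = 0 := by
  rw [← sum_mul_mult_of_sum_eq_one G xs x hx.2]
  refine Finset.sum_eq_zero fun j _ => ?_
  rcases (mult_nonneg_of_stationary G hstat j).eq_or_lt with hzero | hpos
  · rw [← hzero, mul_zero]
  · rw [hsupp j hpos, zero_mul]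

theorem mult_eq_add_inner_sub (x xs : EuclideanSpace ℝ (Fin n)) (i : Fin n) :
    mult G x i = mult G xs i + ⟪G x - G xs, stdVec i - x⟫ - ⟪G xs, x - xs⟫ := by
  simp only [mult, inner_sub_left, inner_sub_right]
  ring

end

theorem multipliers_positive_near_stationary_general {n : ℕ}
    (G : EuclideanSpace ℝ (Fin n) → EuclideanSpace ℝ (Fin n))
    (L : ℝ) (hLpos : 0 < L)
    (hL : ∀ x y, (∑ i, |G x i - G y i|) ≤ L * ∑ i, |x i - y i|)
    (xs : EuclideanSpace ℝ (Fin n))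
    (hstat : ∀ y ∈ probSimplex n, 0 ≤ ⟪G xs, y - xs⟫)
    (δmin : ℝ) (hδmin : IsLeast {v | ∃ i, 0 < mult G xs i ∧ v = mult G xs i} δmin)
    (x : EuclideanSpace ℝ (Fin n)) (hx : x ∈ probSimplex n)
    (hdist : (∑ i, |x i - xs i|) < δmin / (δmin + 2 * L))
    (hsupp : ∀ i, 0 < mult G xs i → x i = 0) :
    ∀ i, 0 < mult G xs i → 0 < mult G x i := by
  intro i hi
  obtain ⟨⟨i₀, hi₀, rfl⟩, hleast⟩ := hδmin
  have hpert : |⟪G x - G xs, stdVec i - x⟫| ≤ L * ∑ j, |x j - xs j| := by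
    simpa only [PiLp.sub_apply] using (abs_inner_stdVec_sub_le hx (G x - G xs) i).trans (hL x xs)
  have hsmall : L * ∑ j, |x j - xs j| < mult G xs i₀ := by
    calc L * ∑ j, |x j - xs j|
        ≤ L * (mult G xs i₀ / (mult G xs i₀ + 2 * L)) := by gcongr
      _ < mult G xs i₀ := by
        rw [mul_div_assoc', div_lt_iff₀ (by positivity)]
        nlinarith
  rw [mult_eq_add_inner_sub G x xs i, inner_sub_eq_zero_of_stationary_of_support G hstat hx hsupp]
  linarith [neg_abs_le ⟪G x - G xs, stdVec i - x⟫, hleast ⟨i, hi, rfl⟩]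

/-- If `x` lies in the ball `‖x − x*‖₁ < δ_min/(δ_min + 2L)` around a stationary point
`x*` and `x_i = 0` for all `i ∈ I^c = {i : λ_i(x*) > 0}`, then `λ_i(x) > 0` for all
`i ∈ I^c`. -/
theorem multipliers_positive_near_stationary {n : ℕ}
    (f : EuclideanSpace ℝ (Fin n) → ℝ)
    (G : EuclideanSpace ℝ (Fin n) → EuclideanSpace ℝ (Fin n))
    (hG : ∀ x, HasGradientAt f (G x) x) (L : ℝ) (hLpos : 0 < L)
    (hL : ∀ x y, (∑ i, |G x i - G y i|) ≤ L * ∑ i, |x i - y i|)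
    (xs : EuclideanSpace ℝ (Fin n)) (hxs : xs ∈ probSimplex n)
    (hstat : ∀ y ∈ probSimplex n, 0 ≤ ⟪G xs, y - xs⟫)
    (hIc : ∃ i, 0 < mult G xs i)
    (δmin : ℝ) (hδmin : IsLeast {v | ∃ i, 0 < mult G xs i ∧ v = mult G xs i} δmin)
    (x : EuclideanSpace ℝ (Fin n)) (hx : x ∈ probSimplex n)
    (hdist : (∑ i, |x i - xs i|) < δmin / (δmin + 2 * L))
    (hsupp : ∀ i, 0 < mult G xs i → x i = 0) :
    ∀ i, 0 < mult G xs i → 0 < mult G x i :=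
  multipliers_positive_near_stationary_general G L hLpos hL xs hstat δmin hδmin x hx hdist hsupp
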